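/- Let (R,m) be a Noetherian local ring which is a homomorphic image of a Cohen-Macaulay local ring, M a finitely generated R-module of dimension d with dimension filtration M = D_0 ⊃ … ⊃ D_s = H^0_m(M), q a parameter ideal, and x ∈ q a superficial element of each D_i with respect to q with Ass((D_i/D_{i+1})/x(D_i/D_{i+1})) ⊆ Assh((D_i/D_{i+1})/x(D_i/D_{i+1})) ∪ {m} for all i and x regular on M/D_i for i = 1,…,s. Let F: M = M_0 ⊃ M_1 ⊃ … ⊃ M_s be a filtration of submodules such that D_i/M_i has finite length for each i = 0,…,s, and assume q is a distinguished parameter ideal of M with respect to F. Then there exists a distinguished system of parameters x_1,…,x_d of M with respect to F such that x_1 = x and q = (x_1,…,x_d). -/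

import Mathlib

open IsLocalRing Filter Pointwise

noncomputable section

namespace Paper

variable (R : Type*) [CommRing R]

/-- The (Krull) dimension of a module `M`, defined as `dim (R / Ann M)`
(`⊥` for the zero module). -/
noncomputable def mdim (M : Type*) [AddCommGroup M] [Module R M] : WithBot ℕ∞ :=
  ringKrullDim (R ⧸ Module.annihilator R M)

/-- The dimension of a submodule. -/
noncomputable def sdim {M : Type*} [AddCommGroup M] [Module R M] (N : Submodule R M) :
    WithBot ℕ∞ :=
  mdim R N

/-- The length of a module, as the Krull dimension of its lattice of submodules. -/
noncomputable def len (M : Type*) [AddCommGroup M] [Module R M] : WithBot ℕ∞ :=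
  Order.krullDim (Submodule R M)

/-- The zeroth local cohomology `H^0_m(M)`, i.e. the `m`-power torsion of `M`. -/
def H0 [IsLocalRing R] (M : Type*) [AddCommGroup M] [Module R M] : Submodule R M :=
  ⨆ n : ℕ, Submodule.torsionBySet R M ((maximalIdeal R ^ n : Ideal R) : Set R)

/-- `Assh M` : associated primes with `dim R/p = dim M`. -/
def Assh (M : Type*) [AddCommGroup M] [Module R M] : Set (Ideal R) :=
  {p ∈ associatedPrimes R M | ringKrullDim (R ⧸ p) = mdim R M}

/-- The quotient `P/Q` of two submodules of `M` (interpreting `Q` inside `P`). -/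
abbrev subQuot {M : Type*} [AddCommGroup M] [Module R M] (P Q : Submodule R M) : Type _ :=
  ↥P ⧸ Q.comap P.subtype

/-- `M/xM`. -/
abbrev modx (x : R) (M : Type*) [AddCommGroup M] [Module R M] : Type _ :=
  M ⧸ (Ideal.span {x} • ⊤ : Submodule R M)

/-- An ideal is `m`-primary. -/
def IsMPrimary [IsLocalRing R] (I : Ideal R) : Prop :=
  I ≤ maximalIdeal R ∧ ∃ n : ℕ, maximalIdeal R ^ n ≤ I

/-- The coefficients `e` give the Hilbert–Samuel polynomial of `M` with respect to `I`,
normalized with respect to the integer `d`: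
`ℓ(M/I^{n+1}M) = ∑_{i=0}^d (-1)^i e_i C(n+d-i, d-i)` for all large `n`. -/
def HasHilbertPoly [IsLocalRing R] (I : Ideal R) (M : Type*) [AddCommGroup M] [Module R M]
    (d : ℕ) (e : ℕ → ℤ) : Prop :=
  (∀ j, d < j → e j = 0) ∧
  ∀ᶠ n : ℕ in Filter.atTop, ∃ l : ℕ,
    len R (M ⧸ (I ^ (n + 1) • ⊤ : Submodule R M)) = (l : ℕ∞) ∧
    (l : ℤ) = ∑ i ∈ Finset.range (d + 1),
      (-1) ^ i * e i * (Nat.choose (n + d - i) (d - i) : ℤ)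

open Classical in
/-- The Hilbert coefficient `e_j(I, M)` (with `d` the dimension of `M`). -/
noncomputable def hilbCoeff [IsLocalRing R] (I : Ideal R) (M : Type*) [AddCommGroup M]
    [Module R M] (d : ℕ) (j : ℕ) : ℤ :=
  if h : ∃ e : ℕ → ℤ, HasHilbertPoly R I M d e then h.choose j else 0

open Classical in
/-- The length-multiplicity `mult_M(p) = ℓ_{R_p}(H^0_{pR_p}(M_p))`. -/
noncomputable def lengthMult (p : Ideal R) (M : Type*) [AddCommGroup M] [Module R M] : ℕ :=
  if hp : p.IsPrime then
    haveI := hp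
    (WithBot.unbotD 0 (len (Localization.AtPrime p)
        (H0 (Localization.AtPrime p) (LocalizedModule p.primeCompl M)))).toNat
  else 0

/-- The `i`-th arithmetic degree `ardeg_i(I,M)`. -/
noncomputable def ardeg [IsLocalRing R] (I : Ideal R) (M : Type*) [AddCommGroup M] [Module R M]
    (i : ℕ) : ℤ :=
  ∑ᶠ p ∈ {p ∈ associatedPrimes R M | ringKrullDim (R ⧸ p) = (i : WithBot ℕ∞)},
    (lengthMult R p M : ℤ) * hilbCoeff R I (R ⧸ p) i 0

variable [IsLocalRing R]

/-- A system of parameters for `M`. -/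
def IsParamSystem (M : Type*) [AddCommGroup M] [Module R M] {d : ℕ} (x : Fin d → R) : Prop :=
  mdim R M = (d : WithBot ℕ∞) ∧ (∀ i, x i ∈ maximalIdeal R) ∧
    IsFiniteLength R (M ⧸ (Ideal.span (Set.range x) • ⊤ : Submodule R M))

/-- A parameter ideal of `M`. -/
def IsParamIdeal (M : Type*) [AddCommGroup M] [Module R M] (d : ℕ) (q : Ideal R) : Prop :=
  ∃ x : Fin d → R, IsParamSystem R M x ∧ q = Ideal.span (Set.range x)

/-- A good system of parameters: `N ∩ (x_{dim N + 1}, …, x_d)M = 0` for every submodule `N`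
of dimension `< d`. (Indices are `0`-based: `x j` here is `x_{j+1}` in the paper.) -/
def IsGoodSOP (M : Type*) [AddCommGroup M] [Module R M] {d : ℕ} (x : Fin d → R) : Prop :=
  IsParamSystem R M x ∧
    ∀ (N : Submodule R M) (k : ℕ), sdim R N = (k : WithBot ℕ∞) → k < d →
      N ⊓ (Ideal.span (x '' {j : Fin d | k ≤ (j : ℕ)}) • ⊤) = ⊥

/-- A distinguished system of parameters with respect to a filtration `F` of length `t`:
`(x_{dim F_i + 1}, …, x_d) ⊆ Ann (F i)` for `1 ≤ i ≤ t`. -/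
def IsDistSOP (M : Type*) [AddCommGroup M] [Module R M] (F : ℕ → Submodule R M) (t : ℕ)
    {d : ℕ} (x : Fin d → R) : Prop :=
  IsParamSystem R M x ∧
    ∀ i, 1 ≤ i → i ≤ t → ∀ k : ℕ, sdim R (F i) = (k : WithBot ℕ∞) →
      ∀ j : Fin d, k ≤ (j : ℕ) → x j ∈ Module.annihilator R ↥(F i)

/-- A distinguished parameter ideal with respect to a filtration. -/
def IsDistParamIdeal (M : Type*) [AddCommGroup M] [Module R M] (F : ℕ → Submodule R M)
    (t d : ℕ) (q : Ideal R) : Prop :=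
  ∃ x : Fin d → R, IsDistSOP R M F t x ∧ q = Ideal.span (Set.range x)

/-- A (strictly decreasing) filtration `M = F 0 ⊃ F 1 ⊃ … ⊃ F t` of submodules. -/
def IsFiltration (M : Type*) [AddCommGroup M] [Module R M] (F : ℕ → Submodule R M)
    (t : ℕ) : Prop :=
  F 0 = ⊤ ∧ ∀ i, i < t → F (i + 1) < F i

/-- The dimension filtration `M = D 0 ⊃ D 1 ⊃ … ⊃ D s = H^0_m(M)`, where `D i` is the largest
submodule of `D (i-1)` of strictly smaller dimension. -/
def IsDimFiltration (M : Type*) [AddCommGroup M] [Module R M] (D : ℕ → Submodule R M)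
    (s : ℕ) : Prop :=
  D 0 = ⊤ ∧ D s = H0 R M ∧
    ∀ i, 1 ≤ i → i ≤ s →
      D i ≤ D (i - 1) ∧ sdim R (D i) < sdim R (D (i - 1)) ∧
        ∀ N : Submodule R M, N ≤ D (i - 1) → sdim R N < sdim R (D (i - 1)) → N ≤ D i

/-- `x ∈ q` is a superficial element of `N ⊆ M` with respect to `q` :
`(q^{n+1}N :_N x) ∩ q^c N = q^n N` for all large `n`. -/
def IsSuperficial {M : Type*} [AddCommGroup M] [Module R M] (q : Ideal R) (N : Submodule R M)
    (x : R) : Prop :=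
  x ∈ q ∧ ∃ c : ℕ, ∀ᶠ n : ℕ in Filter.atTop,
    ((q ^ (n + 1) • N).comap (LinearMap.lsmul R M x) ⊓ N) ⊓ (q ^ c • N) = q ^ n • N

/-- A Cohen–Macaulay module: every system of parameters is a regular sequence. -/
def IsCMModule (M : Type*) [AddCommGroup M] [Module R M] : Prop :=
  ∀ (d : ℕ) (x : Fin d → R), IsParamSystem R M x →
    RingTheory.Sequence.IsRegular M (List.ofFn x)

/-- A sequentially Cohen–Macaulay module. -/
def IsSeqCM (M : Type*) [AddCommGroup M] [Module R M] : Prop :=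
  ∃ (t : ℕ) (F : ℕ → Submodule R M), IsFiltration R M F t ∧
    sdim R (F t) ≤ (0 : WithBot ℕ∞) ∧
    ∀ i, i < t → IsCMModule R (subQuot R (F i) (F (i + 1)))

/-- The unmixed component `U_M(0)`: the largest submodule of dimension `< dim M`. -/
noncomputable def unmixedPart (M : Type*) [AddCommGroup M] [Module R M] : Submodule R M :=
  sSup {N : Submodule R M | sdim R N < mdim R M}

/-- `J` is a reduction of `I`. -/
def IsReduction (I J : Ideal R) : Prop :=
  J ≤ I ∧ ∃ n : ℕ, I ^ (n + 1) = J * I ^ n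

/-- `J` is a minimal reduction of `I`. -/
def IsMinimalReduction (I J : Ideal R) : Prop :=
  IsReduction R I J ∧ ∀ J' : Ideal R, J' ≤ J → IsReduction R I J' → J' = J

/-!
Write `q = (z₁, …, z_d)` with `z` distinguished, `x = ∑ aⱼ zⱼ`, and let `e` be the least positive
dimension of a module `F_i`. Every `F_i` of positive dimension is killed by `z_{e+1}, …, z_d`, and
every `F_i` of dimension `0` by all of `q`. So if some `aⱼ` with `j ≤ e` is a unit, swapping `z₁`
with `zⱼ` and then replacing the first entry by `x` changes neither the ideal nor the
distinguishedness. Otherwise `x ∈ m q + Ann F_i` for an `F_i` of dimension `e`; here `i < s`, since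
`F_s ⊆ H⁰_m(M)` has dimension `≤ 0`. Superficiality of `x` on `D_i` then gives
`q^n D_i = q^{n+1} D_i` for large `n`, so by Nakayama a power of `m` kills `D_i ⊇ F_i`,
contradicting `dim F_i = e > 0`.
-/

section General

variable {A M : Type*} [CommRing A] [AddCommGroup M] [Module A M]

lemma _root_.Submodule.span_range_update_sum_smul {ι : Type*} [Fintype ι] [DecidableEq ι]
    (v : ι → M) (b : ι → A) (i : ι) (hb : IsUnit (b i)) :
    Submodule.span A (Set.range (Function.update v i (∑ k, b k • v k))) =
      Submodule.span A (Set.range v) := by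
  set x := ∑ k, b k • v k
  refine le_antisymm ?_ ?_ <;> simp only [Submodule.span_le, Set.range_subset_iff,
    SetLike.mem_coe] <;> intro k <;> obtain rfl | hik := eq_or_ne k i
  · rw [Function.update_self]
    exact Submodule.sum_mem _ fun k _ => Submodule.smul_mem _ _ (Submodule.subset_span ⟨k, rfl⟩)
  · exact Submodule.subset_span ⟨k, (Function.update_of_ne hik ..).symm⟩
  · have hx : b k • v k = x - ∑ j ∈ Finset.univ.erase k, b j • v j :=
      eq_sub_of_add_eq (Finset.add_sum_erase _ (fun j => b j • v j) (Finset.mem_univ k))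
    have hmem : b k • v k ∈ Submodule.span A (Set.range (Function.update v k x)) := by
      rw [hx]
      refine sub_mem (Submodule.subset_span ⟨k, Function.update_self ..⟩)
        (Submodule.sum_mem _ fun j hj => Submodule.smul_mem _ _ (Submodule.subset_span
          ⟨j, Function.update_of_ne (Finset.ne_of_mem_erase hj) ..⟩))
    simpa [smul_smul, hb.unit.inv_mul] using Submodule.smul_mem _ (↑hb.unit⁻¹ : A) hmem
  · exact Submodule.subset_span ⟨k, Function.update_of_ne hik ..⟩

lemma _root_.Ideal.sum_smul_mem_mul_span_sup {ι : Type*} [Fintype ι] {I J : Ideal A}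
    (a z : ι → A) (h : ∀ j, a j ∈ I ∨ z j ∈ J) :
    ∑ j, a j • z j ∈ I * Ideal.span (Set.range z) ⊔ J :=
  Submodule.sum_mem _ fun j _ => (h j).elim
    (fun ha => Ideal.mem_sup_left (Ideal.mul_mem_mul ha (Ideal.subset_span ⟨j, rfl⟩)))
    (fun hz => Ideal.mem_sup_right (Ideal.mul_mem_left _ _ hz))

lemma _root_.Submodule.smul_smul_comm (I J : Ideal A) (P : Submodule A M) :
    I • J • P = J • I • P := by
  rw [← Submodule.mul_smul, mul_comm, Submodule.mul_smul]

lemma _root_.Submodule.pow_mul_smul_le_pow_smul {I J : Ideal A} {P : Submodule A M} {t : ℕ}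
    (h : I ^ t • P ≤ J • P) (n : ℕ) : I ^ (t * n) • P ≤ J ^ n • P := by
  induction n with
  | zero => simp
  | succ n ih =>
    calc I ^ (t * (n + 1)) • P = I ^ (t * n) • I ^ t • P := by
          rw [mul_add_one, pow_add, Submodule.mul_smul]
      _ ≤ I ^ (t * n) • J • P := smul_mono_right _ h
      _ = J • I ^ (t * n) • P := Submodule.smul_smul_comm _ _ _
      _ ≤ J • J ^ n • P := smul_mono_right _ ih
      _ = J ^ (n + 1) • P := by rw [← Submodule.mul_smul, pow_succ']

lemma _root_.Submodule.exists_pow_smul_le_smul [IsNoetherianRing A] [Module.Finite A M]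
    {I J : Ideal A} {t : ℕ} (h : J ^ t • (⊤ : Submodule A M) ≤ I • ⊤) (N : Submodule A M) :
    ∃ T, J ^ T • N ≤ I • N := by
  obtain ⟨k, hk⟩ := Ideal.exists_pow_inf_eq_pow_smul I N
  refine ⟨t * (k + 1), ?_⟩
  calc J ^ (t * (k + 1)) • N ≤ I ^ (k + 1) • ⊤ ⊓ N :=
        le_inf ((smul_mono_right _ le_top).trans (Submodule.pow_mul_smul_le_pow_smul h _))
          Submodule.smul_le_right
    _ = I ^ (k + 1 - k) • (I ^ k • ⊤ ⊓ N) := hk _ (Nat.le_succ k)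
    _ ≤ I • N := by
        rw [Nat.add_sub_cancel_left, pow_one]
        exact smul_mono_right _ inf_le_right

lemma _root_.Submodule.add_pow_smul_eq_pow_smul {F : Submodule A M} {u v : A}
    (hv : v ∈ F.annihilator) {w : M} (hw : w ∈ F) (n : ℕ) : (u + v) ^ n • w = u ^ n • w := by
  obtain ⟨c, hc⟩ := sub_dvd_pow_sub_pow (u + v) u n
  rw [← sub_eq_zero, ← sub_smul, hc, add_sub_cancel_left, mul_comm, mul_smul,
    Submodule.mem_annihilator.mp hv w hw, smul_zero]

end General

section LocalRing

variable {A M : Type*} [CommRing A] [IsLocalRing A] [AddCommGroup M] [Module A M]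

lemma _root_.IsFiniteLength.exists_pow_maximalIdeal_smul_top_eq_bot (h : IsFiniteLength A M) :
    ∃ n, maximalIdeal A ^ n • (⊤ : Submodule A M) = ⊥ := by
  obtain ⟨_, _⟩ := isFiniteLength_iff_isNoetherian_isArtinian.mp h
  obtain ⟨n, hn⟩ := IsArtinian.monotone_stabilizes (R := A) (M := M)
    ⟨fun n => OrderDual.toDual (maximalIdeal A ^ n • ⊤ : Submodule A M),
     fun _ _ hab => Submodule.smul_mono_left (Ideal.pow_le_pow_right hab)⟩
  refine ⟨n, Submodule.eq_bot_of_le_smul_of_le_jacobson_bot (maximalIdeal A) _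
    (IsNoetherian.noetherian _) ?_ (maximalIdeal_le_jacobson ⊥)⟩
  calc maximalIdeal A ^ n • (⊤ : Submodule A M) = maximalIdeal A ^ (n + 1) • ⊤ :=
        hn (n + 1) n.le_succ
    _ ≤ maximalIdeal A • maximalIdeal A ^ n • ⊤ := by rw [pow_succ', Submodule.mul_smul]

lemma _root_.Submodule.exists_pow_maximalIdeal_smul_top_le {P : Submodule A M}
    (h : IsFiniteLength A (M ⧸ P)) : ∃ n, maximalIdeal A ^ n • (⊤ : Submodule A M) ≤ P := by
  obtain ⟨n, hn⟩ := h.exists_pow_maximalIdeal_smul_top_eq_bot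
  refine ⟨n, fun y hy => ?_⟩
  have : P.mkQ y ∈ maximalIdeal A ^ n • (⊤ : Submodule A (M ⧸ P)) := by
    rw [← P.range_mkQ, LinearMap.range_eq_map, ← Submodule.map_smul'']
    exact Submodule.mem_map_of_mem hy
  rwa [hn, Submodule.mem_bot, Submodule.mkQ_apply, Submodule.Quotient.mk_eq_zero] at this

lemma _root_.Submodule.exists_pow_maximalIdeal_smul_le {P Q : Submodule A M}
    (h : IsFiniteLength A (P ⧸ Q.comap P.subtype)) : ∃ n, maximalIdeal A ^ n • P ≤ Q := by
  obtain ⟨n, hn⟩ := Submodule.exists_pow_maximalIdeal_smul_top_le h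
  refine ⟨n, ?_⟩
  have := Submodule.map_mono (f := P.subtype) hn
  rw [Submodule.map_smul'', Submodule.map_subtype_top, Submodule.map_comap_subtype] at this
  exact (le_inf_iff.mp this).2

lemma _root_.ringKrullDim_quotient_nonpos_of_pow_le {I : Ideal A} {n : ℕ}
    (h : maximalIdeal A ^ n ≤ I) : ringKrullDim (A ⧸ I) ≤ 0 := by
  suffices Ring.KrullDimLE 0 (A ⧸ I) from Ring.krullDimLE_iff.mp this
  refine Ring.krullDimLE_zero_iff.mpr fun J hJ =>
    Ideal.isMaximal_of_isIntegral_of_isMaximal_comap (R := A) _ ?_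
  have hJ' := hJ.comap (Ideal.Quotient.mk I)
  have hle : maximalIdeal A ≤ J.comap (Ideal.Quotient.mk I) :=
    hJ'.le_of_pow_le (h.trans (by simpa using Ideal.ker_le_comap (Ideal.Quotient.mk I)))
  exact (maximalIdeal.isMaximal A).eq_of_le hJ'.ne_top hle ▸ maximalIdeal.isMaximal A

end LocalRing

section

variable {R M : Type*} [CommRing R] [AddCommGroup M] [Module R M]

lemma sdim_top : sdim R (⊤ : Submodule R M) = mdim R M := by
  simp only [sdim, mdim]
  exact congrArg (fun I => ringKrullDim (R ⧸ I)) Submodule.annihilator_top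

lemma sdim_mono {N P : Submodule R M} (h : N ≤ P) : sdim R N ≤ sdim R P :=
  ringKrullDim_le_of_surjective _ (Ideal.Quotient.factor_surjective (Submodule.annihilator_mono h))

lemma IsSuperficial.exists_mem_of_pow_smul_mem {q : Ideal R} {N : Submodule R M} {x : R}
    (hx : IsSuperficial R q N x) :
    ∃ n₀, ∀ n ≥ n₀, ∀ w ∈ q ^ n • N, ∀ j : ℕ,
      x ^ j • w ∈ q ^ (n + j + 1) • N → w ∈ q ^ (n + 1) • N := by
  obtain ⟨-, c, hc⟩ := hx
  obtain ⟨n₁, hn₁⟩ := eventually_atTop.mp hc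
  refine ⟨max c n₁, fun n hn w hw j => ?_⟩
  have hwc : ∀ i : ℕ, x ^ i • w ∈ q ^ c • N := fun i => Submodule.smul_mem _ _
    (Submodule.smul_mono_left (Ideal.pow_le_pow_right (le_of_max_le_left hn)) hw)
  induction j with
  | zero => simp
  | succ j ih =>
    intro hj
    refine ih ?_
    rw [← hn₁ (n + j + 1) (by omega)]
    refine ⟨⟨?_, Submodule.smul_le_right (hwc j)⟩, hwc j⟩
    show x • x ^ j • w ∈ q ^ (n + j + 1 + 1) • N
    rw [smul_smul, ← pow_succ']
    simpa only [add_assoc] using hj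

variable [IsLocalRing R]

lemma IsParamSystem.span_le_maximalIdeal {d : ℕ} {z : Fin d → R} (hz : IsParamSystem R M z) :
    Ideal.span (Set.range z) ≤ maximalIdeal R :=
  Ideal.span_le.mpr (Set.range_subset_iff.mpr hz.2.1)

lemma sdim_nonpos_of_pow_smul_eq_bot {N : Submodule R M} {n : ℕ}
    (h : maximalIdeal R ^ n • N = ⊥) : sdim R N ≤ 0 :=
  ringKrullDim_quotient_nonpos_of_pow_le (Submodule.le_annihilator_iff.mpr h)

lemma sdim_H0_nonpos [IsNoetherian R M] : sdim R (H0 R M) ≤ 0 := by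
  let torsion : ℕ →o Submodule R M :=
    ⟨fun n => Submodule.torsionBySet R M (maximalIdeal R ^ n : Ideal R),
     fun _ _ h => Submodule.torsionBySet_le_torsionBySet_of_subset
       (SetLike.coe_subset_coe.mpr (Ideal.pow_le_pow_right h))⟩
  obtain ⟨n, hn⟩ := monotone_stabilizes_iff_noetherian.mpr inferInstance torsion
  have hH0 : H0 R M ≤ torsion n := iSup_le fun i => by
    rcases le_total i n with h | h
    exacts [torsion.mono h, (hn i h).ge]
  refine sdim_nonpos_of_pow_smul_eq_bot (n := n) (le_bot_iff.mp (Submodule.smul_le.mpr ?_))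
  exact fun r hr w hw =>
    (Submodule.mem_bot R).mpr ((Submodule.mem_torsionBySet_iff _ _).mp (hH0 hw) ⟨r, hr⟩)

lemma exists_pow_smul_eq_bot_of_isSuperficial [IsNoetherianRing R] [Module.Finite R M]
    {q : Ideal R} {N F : Submodule R M} {x : R} (hq : q ≤ maximalIdeal R)
    (hqM : IsFiniteLength R (M ⧸ (q • ⊤ : Submodule R M)))
    (hNF : IsFiniteLength R (subQuot R N F)) (hx : x ∈ maximalIdeal R * q ⊔ F.annihilator)
    (hsup : IsSuperficial R q N x) : ∃ K, maximalIdeal R ^ K • N = ⊥ := by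
  obtain ⟨t, ht⟩ := Submodule.exists_pow_maximalIdeal_smul_top_le hqM
  obtain ⟨T, hT⟩ := Submodule.exists_pow_smul_le_smul ht N
  obtain ⟨n₀, hF⟩ := Submodule.exists_pow_maximalIdeal_smul_le hNF
  obtain ⟨n₁, hn₁⟩ := hsup.exists_mem_of_pow_smul_mem
  obtain ⟨u, hu, v, hv, rfl⟩ := Submodule.mem_sup.mp hx
  set n := max n₀ n₁
  have hle : (maximalIdeal R * q) ^ T • q ^ n • N ≤ q ^ (n + T + 1) • N :=
    calc (maximalIdeal R * q) ^ T • q ^ n • N = q ^ (n + T) • maximalIdeal R ^ T • N := by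
          rw [mul_pow, Submodule.mul_smul, ← Submodule.mul_smul (q ^ T), ← pow_add,
            Submodule.smul_smul_comm, add_comm]
      _ ≤ q ^ (n + T) • q • N := smul_mono_right _ hT
      _ = q ^ (n + T + 1) • N := by rw [← Submodule.mul_smul, pow_succ]
  -- `v` kills `w`, so `x^T w = u^T w` sits `T + 1` steps deeper in the `q`-adic filtration,
  -- and superficiality peels the factor `x^T` off again.
  have hstable : q ^ n • N ≤ q • q ^ n • N := by
    intro w hw
    have hwF : w ∈ F := hF (Submodule.smul_mono_left
      ((Ideal.pow_right_mono hq n).trans (Ideal.pow_le_pow_right (le_max_left _ _))) hw)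
    have hTw : (u + v) ^ T • w ∈ q ^ (n + T + 1) • N := by
      rw [Submodule.add_pow_smul_eq_pow_smul hv hwF]
      exact hle (Submodule.smul_mem_smul (Ideal.pow_mem_pow hu T) hw)
    rw [← Submodule.mul_smul, ← pow_succ']
    exact hn₁ n (le_max_right _ _) w hw T hTw
  have hbot : q ^ n • N = ⊥ := Submodule.eq_bot_of_le_smul_of_le_jacobson_bot q _
    (IsNoetherian.noetherian _) hstable (hq.trans (maximalIdeal_le_jacobson ⊥))
  exact ⟨T * n, le_bot_iff.mp (hbot ▸ Submodule.pow_mul_smul_le_pow_smul hT n)⟩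

section DistinguishedSOP

variable {F : ℕ → Submodule R M} {t d : ℕ} {z : Fin d → R}

lemma IsDistSOP.mem_annihilator (hz : IsDistSOP R M F t z) (hF : F 0 = ⊤) {i : ℕ} (hi : i ≤ t)
    {k : ℕ} (hk : sdim R (F i) = k) {j : Fin d} (hj : k ≤ j) : z j ∈ (F i).annihilator := by
  rcases Nat.eq_zero_or_pos i with rfl | hi0
  · rw [hF, sdim_top, hz.1.1, Nat.cast_inj] at hk
    exact absurd j.isLt (by omega)
  · exact hz.2 i hi0 hi k hk j hj

lemma IsDistSOP.sum_smul_mem_mul_sup_annihilator (hz : IsDistSOP R M F t z) (hF : F 0 = ⊤)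
    {i : ℕ} (hi : i ≤ t) {k : ℕ} (hk : sdim R (F i) = k) {a : Fin d → R}
    (ha : ∀ j : Fin d, (j : ℕ) < k → a j ∈ maximalIdeal R) :
    ∑ j, a j • z j ∈ maximalIdeal R * Ideal.span (Set.range z) ⊔ (F i).annihilator := by
  refine Ideal.sum_smul_mem_mul_span_sup a z fun j => ?_
  by_cases hj : (j : ℕ) < k
  · exact Or.inl (ha j hj)
  · exact Or.inr (hz.mem_annihilator hF hi hk (not_lt.mp hj))

lemma IsDistSOP.of_span_range_eq (hz : IsDistSOP R M F t z) {y : Fin d → R}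
    (hspan : Ideal.span (Set.range y) = Ideal.span (Set.range z)) {j₀ : ℕ}
    (hyz : ∀ j : Fin d, j₀ < j → y j = z j)
    (hdim : ∀ i, 1 ≤ i → i ≤ t → ∀ k : ℕ, sdim R (F i) = k → k ≤ j₀ → k = 0) :
    IsDistSOP R M F t y := by
  have hy : ∀ {I : Ideal R}, (∀ j, z j ∈ I) → ∀ j, y j ∈ I := fun hI j =>
    (hspan ▸ Ideal.span_le.mpr (Set.range_subset_iff.mpr hI)) (Ideal.subset_span ⟨j, rfl⟩)
  refine ⟨⟨hz.1.1, hy hz.1.2.1, hspan ▸ hz.1.2.2⟩, fun i hi1 hit k hk j hkj => ?_⟩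
  by_cases hkj₀ : k ≤ j₀
  · obtain rfl := hdim i hi1 hit k hk hkj₀
    exact hy (fun j' => hz.2 i hi1 hit 0 hk j' (Nat.zero_le _)) j
  · rw [hyz j (by omega)]
    exact hz.2 i hi1 hit k hk j hkj

lemma IsDistSOP.exists_swap_update (hz : IsDistSOP R M F t z) (hd : 0 < d) {x : R}
    {a : Fin d → R} (hxa : ∑ j, a j • z j = x) {j₀ : Fin d} (hunit : IsUnit (a j₀))
    (hdim : ∀ i, 1 ≤ i → i ≤ t → ∀ k : ℕ, sdim R (F i) = k → k ≤ j₀ → k = 0) :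
    ∃ y : Fin d → R, IsDistSOP R M F t y ∧ y ⟨0, hd⟩ = x ∧
      Ideal.span (Set.range z) = Ideal.span (Set.range y) := by
  subst hxa
  set σ := Equiv.swap (⟨0, hd⟩ : Fin d) j₀
  have hspan : Ideal.span (Set.range (Function.update (z ∘ σ) ⟨0, hd⟩ (∑ j, a j • z j))) =
      Ideal.span (Set.range z) := by
    rw [← Equiv.sum_comp σ]
    refine (Submodule.span_range_update_sum_smul (z ∘ σ) (a ∘ σ) _ ?_).trans ?_
    · simpa [σ] using hunit
    · rw [EquivLike.range_comp]
  refine ⟨_, hz.of_span_range_eq hspan (j₀ := j₀) (fun j hj => ?_) hdim,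
    Function.update_self .., hspan.symm⟩
  have hj0 : j ≠ ⟨0, hd⟩ := fun h => by simp [h] at hj
  rw [Function.update_of_ne hj0, Function.comp_apply,
    Equiv.swap_apply_of_ne_of_ne hj0 (Fin.ne_of_gt hj)]

end DistinguishedSOP

end

theorem statement6_general
    (R : Type*) [CommRing R] [IsLocalRing R] [IsNoetherianRing R]
    (M : Type*) [AddCommGroup M] [Module R M] [Module.Finite R M]
    (d : ℕ) (hd0 : 0 < d)
    (D : ℕ → Submodule R M) (s : ℕ) (hD : IsDimFiltration R M D s)
    (q : Ideal R) (x : R)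
    (hx1 : ∀ i, i < s → IsSuperficial R q (D i) x)
    (F : ℕ → Submodule R M) (hF : IsFiltration R M F s)
    (hFD : ∀ i, i ≤ s → F i ≤ D i ∧ IsFiniteLength R (subQuot R (D i) (F i)))
    (hqdist : IsDistParamIdeal R M F s d q) :
    ∃ y : Fin d → R, IsDistSOP R M F s y ∧ y ⟨0, hd0⟩ = x ∧
      q = Ideal.span (Set.range y) := by
  obtain ⟨z, hz, rfl⟩ := hqdist
  have hpos : ∃ k : ℕ, 0 < k ∧ ∃ i ≤ s, sdim R (F i) = k :=
    ⟨d, hd0, 0, Nat.zero_le s, by rw [hF.1, sdim_top, hz.1.1]⟩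
  obtain ⟨he, i₀, hi₀s, hdim₀⟩ := Nat.find_spec hpos
  have hdim_pos : ¬ sdim R (F i₀) ≤ 0 := by
    rw [hdim₀]
    exact_mod_cast he.not_ge
  have hi₀ : i₀ < s := lt_of_le_of_ne hi₀s fun h => hdim_pos
    ((sdim_mono (h ▸ (hFD s le_rfl).1.trans hD.2.1.le)).trans sdim_H0_nonpos)
  obtain ⟨a, hxa⟩ := (Submodule.mem_span_range_iff_exists_fun R).mp (hx1 i₀ hi₀).1
  by_cases hunit : ∃ j : Fin d, (j : ℕ) < Nat.find hpos ∧ IsUnit (a j)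
  · obtain ⟨j₀, hj₀, hu⟩ := hunit
    refine hz.exists_swap_update hd0 hxa hu fun i hi1 hit k hk hkj => by_contra fun hk0 => ?_
    exact absurd (Nat.find_min' hpos ⟨Nat.pos_of_ne_zero hk0, i, hit, hk⟩) (by omega)
  push Not at hunit
  have hx := hz.sum_smul_mem_mul_sup_annihilator hF.1 hi₀s hdim₀ fun j hj =>
    (mem_maximalIdeal _).mpr (hunit j hj)
  obtain ⟨K, hK⟩ := exists_pow_smul_eq_bot_of_isSuperficial hz.1.span_le_maximalIdeal
    hz.1.2.2 (hFD i₀ hi₀.le).2 (hxa ▸ hx) (hx1 i₀ hi₀)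
  exact (hdim_pos ((sdim_mono (hFD i₀ hi₀.le).1).trans (sdim_nonpos_of_pow_smul_eq_bot hK))).elim

/-- Lemma 2.10. -/
theorem statement6
    (S : Type*) [CommRing S] [IsLocalRing S] [IsNoetherianRing S] (hS : IsCMModule S S)
    (R : Type*) [CommRing R] [IsLocalRing R] [IsNoetherianRing R]
    (f : S →+* R) (hf : Function.Surjective f)
    (M : Type*) [AddCommGroup M] [Module R M] [Module.Finite R M]
    (d : ℕ) (hd0 : 0 < d) (hd : mdim R M = (d : WithBot ℕ∞))
    (D : ℕ → Submodule R M) (s : ℕ) (hD : IsDimFiltration R M D s)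
    (q : Ideal R) (hq : IsParamIdeal R M d q) (x : R)
    (hx1 : ∀ i, i < s → IsSuperficial R q (D i) x)
    (hx2 : ∀ i, i < s →
      associatedPrimes R (modx R x (subQuot R (D i) (D (i + 1)))) ⊆
        Assh R (modx R x (subQuot R (D i) (D (i + 1)))) ∪ {maximalIdeal R})
    (hx3 : ∀ i, 1 ≤ i → i ≤ s → IsSMulRegular (M ⧸ D i) x)
    (F : ℕ → Submodule R M) (hF : IsFiltration R M F s)
    (hFD : ∀ i, i ≤ s → F i ≤ D i ∧ IsFiniteLength R (subQuot R (D i) (F i)))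
    (hqdist : IsDistParamIdeal R M F s d q) :
    ∃ y : Fin d → R, IsDistSOP R M F s y ∧ y ⟨0, hd0⟩ = x ∧
      q = Ideal.span (Set.range y) :=
  statement6_general R M d hd0 D s hD q x hx1 F hF hFD hqdist

end Paper
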